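/- For a centred Catalan set S of size n, the following identity holds: binomial(n-1, 2) = Σ_{i ∈ S, i ≠ 0} (|i| − 1) + area(M(S)). -/

import Mathlib

open Finset

/-- `S` is a centred Catalan set of size `n`: an `n`-subset of `{-n+1,…,n-1}` with
`|S ∩ {-i,…,i}| ≥ i+1` for all `0 ≤ i ≤ n-1`. -/
def IsCCS (n : ℕ) (S : Finset ℤ) : Prop :=
  S.card = n ∧ (∀ x ∈ S, -(n : ℤ) + 1 ≤ x ∧ x ≤ (n : ℤ) - 1) ∧
  ∀ i : ℕ, i ≤ n - 1 → (i : ℤ) + 1 ≤ ((S ∩ Finset.Icc (-(i : ℤ)) (i : ℤ)).card : ℤ)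

/-- The dilation operator `s_l`. -/
def dil (l : ℤ) (x : ℤ) : ℤ := if 0 < x then x + l else if x = 0 then 0 else x - l

/-- Concatenation `S1 ∘ S2 = S1 ∪ s_{|S1|-1}(S2)` of centred Catalan sets. -/
def ccsConcat (S1 S2 : Finset ℤ) : Finset ℤ := S1 ∪ S2.image (dil ((S1.card : ℤ) - 1))

/-- A Dyck path: steps `±1`, nonnegative partial sums, total sum `0`. -/
def IsDyck (L : List ℤ) : Prop :=
  (∀ x ∈ L, x = 1 ∨ x = -1) ∧ (∀ k, 0 ≤ (L.take k).sum) ∧ L.sum = 0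

/-- The `p`-th integer in the reading order `0, -1, 1, -2, 2, …, -n+1, n-1, n`. -/
def readOrder (n : ℕ) (p : ℕ) : ℤ :=
  if p = 2 * n - 1 then (n : ℤ)
  else if p % 2 = 1 then -(((p + 1) / 2 : ℕ) : ℤ) else ((p / 2 : ℕ) : ℤ)

/-- The Dyck path `D(S)` associated with a centred Catalan set `S` of size `n`. -/
def toDyck (n : ℕ) (S : Finset ℤ) : List ℤ :=
  (List.range (2 * n)).map fun p => if readOrder n p ∈ S then (1 : ℤ) else -1

/-- A Motzkin path: steps in `{-1,0,1}`, nonnegative partial sums, total sum `0`. -/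
def IsMotzkin (L : List ℤ) : Prop :=
  (∀ x ∈ L, x = -1 ∨ x = 0 ∨ x = 1) ∧ (∀ k, 0 ≤ (L.take k).sum) ∧ L.sum = 0

/-- The Motzkin path `M(S)` of a centred Catalan set `S` of size `n`:
its `i`-th step is `|{-i,i} ∩ S| - 1`. -/
def motz (n : ℕ) (S : Finset ℤ) : List ℤ :=
  (List.range (n - 1)).map fun k =>
    ((S ∩ ({-((k : ℤ) + 1), (k : ℤ) + 1} : Finset ℤ)).card : ℤ) - 1

/-- The area enclosed between a Motzkin path and the x-axis
(sum of the trapezoid areas `(h_{j-1}+h_j)/2`, which for a path returning to the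
x-axis equals the sum of the heights `h_0, …, h_{len-1}`). -/
def marea (L : List ℤ) : ℤ := ∑ j ∈ Finset.range L.length, (L.take j).sum

/-- In every row, consecutive nonzero entries alternate in sign. -/
def RowAlt (A : ℤ → ℤ → ℤ) : Prop :=
  ∀ i j1 j2, j1 < j2 → A i j1 ≠ 0 → A i j2 ≠ 0 →
    (∀ j, j1 < j → j < j2 → A i j = 0) → A i j1 = -A i j2

/-- In every column, consecutive nonzero entries alternate in sign. -/
def ColAlt (A : ℤ → ℤ → ℤ) : Prop :=
  ∀ j i1 i2, i1 < i2 → A i1 j ≠ 0 → A i2 j ≠ 0 →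
    (∀ i, i1 < i → i < i2 → A i j = 0) → A i1 j = -A i2 j

/-- In every column, the first nonzero entry from the top (rows are numbered from
the bottom, so the entry with the largest row index) is `1`. -/
def ColTopPos (A : ℤ → ℤ → ℤ) : Prop :=
  ∀ i j, A i j ≠ 0 → (∀ i', i < i' → A i' j = 0) → A i j = 1

/-- An alternating sign triangle of order `n`, encoded as `A : ℤ → ℤ → ℤ` where
`A i j` is the entry in row `i` (from the bottom, `1 ≤ i ≤ n`) and column `j`
(`-i+1 ≤ j ≤ i-1`), with value `0` outside this range. -/
def IsAST (n : ℕ) (A : ℤ → ℤ → ℤ) : Prop :=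
  (∀ i j, A i j ≠ 0 → 1 ≤ i ∧ i ≤ (n : ℤ) ∧ -i + 1 ≤ j ∧ j ≤ i - 1) ∧
  (∀ i j, A i j = -1 ∨ A i j = 0 ∨ A i j = 1) ∧
  (∀ i : ℤ, 1 ≤ i → i ≤ (n : ℤ) → ∑ j ∈ Finset.Icc (-i + 1) (i - 1), A i j = 1) ∧
  RowAlt A ∧ ColAlt A ∧ ColTopPos A

/-- The set of column labels of an AST of order `n` with positive column-sum. -/
noncomputable def astCols (n : ℕ) (A : ℤ → ℤ → ℤ) : Finset ℤ :=
  (Finset.Icc (-(n : ℤ) + 1) ((n : ℤ) - 1)).filter fun j =>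
    0 < ∑ i ∈ Finset.Icc (1 : ℤ) (n : ℤ), A i j

/-- An `(n,l)`-alternating sign trapezoid, encoded as `A : ℤ → ℤ → ℤ` where
`A i j` is the entry in row `i` (from the bottom, `1 ≤ i ≤ n`) and column `j`
(`-i+1 ≤ j ≤ l+i-1`), with value `0` outside this range. -/
def IsASTrap (n l : ℕ) (A : ℤ → ℤ → ℤ) : Prop :=
  (∀ i j, A i j ≠ 0 → 1 ≤ i ∧ i ≤ (n : ℤ) ∧ -i + 1 ≤ j ∧ j ≤ (l : ℤ) + i - 1) ∧
  (∀ i j, A i j = -1 ∨ A i j = 0 ∨ A i j = 1) ∧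
  (∀ i : ℤ, 1 ≤ i → i ≤ (n : ℤ) →
    ∑ j ∈ Finset.Icc (-i + 1) ((l : ℤ) + i - 1), A i j = 1) ∧
  (∀ j : ℤ, 1 ≤ j → j ≤ (l : ℤ) - 1 → ∑ i ∈ Finset.Icc (1 : ℤ) (n : ℤ), A i j = 0) ∧
  RowAlt A ∧ ColAlt A ∧ ColTopPos A

/-- The centred Catalan set `S(A)` associated with an `(n,l)`-AS-trapezoid `A`:
take the columns with positive column-sum, subtract `1` from nonpositive labels,
subtract `l-1` from positive labels, and adjoin `0`. -/
noncomputable def trapCat (n l : ℕ) (A : ℤ → ℤ → ℤ) : Finset ℤ :=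
  insert 0
    (((Finset.Icc (-(n : ℤ) + 1) ((l : ℤ) + n - 1)).filter
        (fun j => 0 < ∑ i ∈ Finset.Icc (1 : ℤ) (n : ℤ), A i j)).image
      fun j => if j ≤ 0 then j - 1 else j - ((l : ℤ) - 1))

/-- `wS n l S`: the number of `(n,l)`-AS-trapezoids with associated centred
Catalan set `S`. -/
noncomputable def wS (n l : ℕ) (S : Finset ℤ) : ℕ :=
  Nat.card {A : ℤ → ℤ → ℤ // IsASTrap n l A ∧ trapCat n l A = S}

/-- `wM n l M`: the number of `(n,l)`-AS-trapezoids whose associated Motzkin path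
is `M`. -/
noncomputable def wM (n l : ℕ) (M : List ℤ) : ℕ :=
  Nat.card {A : ℤ → ℤ → ℤ // IsASTrap n l A ∧ motz (n + 1) (trapCat n l A) = M}

/-- Placing the trapezoid `A2` centred above the `n1`-row trapezoid `A1`. -/
def stack (n1 : ℕ) (A1 A2 : ℤ → ℤ → ℤ) : ℤ → ℤ → ℤ :=
  fun i j => if i ≤ (n1 : ℤ) then A1 i j else A2 (i - n1) (j + n1)

lemma list_sum_map_range (f : ℕ → ℤ) (n : ℕ) :
    ((List.range n).map f).sum = ∑ i ∈ Finset.range n, f i := by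
  induction n with
  | zero => simp
  | succ m ih =>
    rw [Finset.sum_range_succ, List.range_succ, List.map_append, List.sum_append, ih]; simp

lemma gauss_choose (m : ℕ) : (2:ℤ) * ((m.choose 2 : ℕ) : ℤ) = (m:ℤ) * ((m:ℤ) - 1) := by
  induction m with
  | zero => simp
  | succ k ih =>
    rw [Nat.choose_succ_succ, Nat.choose_one_right]
    push_cast
    push_cast at ih
    ring_nf
    ring_nf at ih
    linarith

lemma gsum_aux (m : ℕ) : ∑ k ∈ Finset.range m, ((m:ℤ) - 1 - (k:ℤ)) = ((m.choose 2 : ℕ) : ℤ) := by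
  induction m with
  | zero => simp
  | succ k ih =>
    rw [Finset.sum_range_succ, Nat.choose_succ_succ, Nat.choose_one_right]
    have : ∀ j ∈ Finset.range k, (((k+1:ℕ):ℤ) - 1 - (j:ℤ)) = ((k:ℤ) - 1 - (j:ℤ)) + 1 := by
      intro j _; push_cast; ring
    rw [Finset.sum_congr rfl this, Finset.sum_add_distrib, ih]
    push_cast; simp; ring

lemma swap_sum (m : ℕ) (a : ℕ → ℤ) :
    ∑ j ∈ Finset.range m, ∑ k ∈ Finset.range j, a k
      = ∑ k ∈ Finset.range m, ((m:ℤ) - 1 - (k:ℤ)) * a k := by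
  induction m with
  | zero => simp
  | succ m ih =>
    rw [Finset.sum_range_succ, ih, Finset.sum_range_succ]
    have h2 : ∀ k ∈ Finset.range m, (((m+1:ℕ):ℤ) - 1 - (k:ℤ)) * a k
        = ((m:ℤ) - 1 - (k:ℤ)) * a k + a k := by
      intro k _; push_cast; ring
    rw [Finset.sum_congr rfl h2, Finset.sum_add_distrib]
    push_cast; ring

/-- For a centred Catalan set `S` of size `n`:
`binomial(n-1, 2) = Σ_{i ∈ S, i ≠ 0} (|i| - 1) + area(M(S))`. -/
theorem stmt17 (n : ℕ) (S : Finset ℤ) (h : IsCCS n S) :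
    (((n - 1).choose 2 : ℕ) : ℤ)
      = (∑ i ∈ S.erase 0, (|i| - 1)) + marea (motz n S) := by
  obtain ⟨hcard, hbd, hcnt⟩ := h
  -- 0 ∈ S
  have h0S : (0:ℤ) ∈ S := by
    have hc := hcnt 0 (Nat.zero_le _)
    have hpos : 0 < (S ∩ Finset.Icc (-((0:ℕ):ℤ)) ((0:ℕ):ℤ)).card := by omega
    obtain ⟨x, hx⟩ := Finset.card_pos.mp hpos
    rw [Finset.mem_inter, Finset.mem_Icc] at hx
    have hx0 : x = 0 := by omega
    rw [← hx0]; exact hx.1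
  have hn1 : 1 ≤ n := by
    rw [← hcard]; exact Finset.card_pos.mpr ⟨0, h0S⟩
  set m := n - 1 with hm
  set P : ℕ → Finset ℤ := fun k => S ∩ ({-((k:ℤ)+1), (k:ℤ)+1} : Finset ℤ) with hP
  have hmem : ∀ k i, i ∈ P k ↔ i ∈ S ∧ (i = -((k:ℤ)+1) ∨ i = (k:ℤ)+1) := by
    intro k i; simp [hP]
  have hdisj : (↑(Finset.range m) : Set ℕ).PairwiseDisjoint P := by
    intro k1 _ k2 _ hne
    refine Finset.disjoint_left.mpr fun i hi1 hi2 => ?_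
    rw [hmem] at hi1 hi2
    rcases hi1.2 with h1 | h1 <;> rcases hi2.2 with h2 | h2 <;> omega
  have hbi : (Finset.range m).biUnion P = S.erase 0 := by
    ext i
    simp only [Finset.mem_biUnion, Finset.mem_range, hmem, Finset.mem_erase]
    constructor
    · rintro ⟨k, hk, hiS, hcase⟩
      refine ⟨?_, hiS⟩
      rcases hcase with rfl | rfl <;> omega
    · rintro ⟨hne, hiS⟩
      obtain ⟨hlo, hhi⟩ := hbd i hiS
      exact ⟨i.natAbs - 1, by omega, hiS, by omega⟩
  have key : ∀ g : ℤ → ℤ, ∑ i ∈ S.erase 0, g i = ∑ k ∈ Finset.range m, ∑ i ∈ P k, g i := by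
    intro g; rw [← hbi, Finset.sum_biUnion hdisj]
  -- total count
  have hsum1 : ∑ k ∈ Finset.range m, ((P k).card : ℤ) = (m:ℤ) := by
    have h1 := key (fun _ => (1:ℤ))
    simp only [Finset.sum_const, nsmul_eq_mul, mul_one] at h1
    rw [Finset.card_erase_of_mem h0S, hcard] at h1
    exact h1.symm
  -- the |i| - 1 sum
  have hsumg : ∑ i ∈ S.erase 0, (|i| - 1) = ∑ k ∈ Finset.range m, (k:ℤ) * ((P k).card : ℤ) := by
    rw [key]
    refine Finset.sum_congr rfl fun k _ => ?_
    have hconst : ∀ i ∈ P k, |i| - 1 = (k:ℤ) := by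
      intro i hi
      rw [hmem] at hi
      rcases hi.2 with rfl | rfl
      · rw [abs_neg, abs_of_nonneg (by positivity)]; ring
      · rw [abs_of_nonneg (by positivity)]; ring
    rw [Finset.sum_congr rfl hconst, Finset.sum_const, nsmul_eq_mul]
    ring
  -- marea
  have hmot : motz n S = (List.range m).map (fun k => ((P k).card : ℤ) - 1) := by
    rw [hm, hP]
    unfold motz
    rw [bind_pure_comp, List.map_eq_map, List.map_map]
    rfl
  have hlen : (motz n S).length = m := by rw [hmot]; simp
  have htake : ∀ j ∈ Finset.range m, ((motz n S).take j).sum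
      = ∑ k ∈ Finset.range j, (((P k).card : ℤ) - 1) := by
    intro j hj
    rw [hmot, ← List.map_take, List.take_range,
      min_eq_left (le_of_lt (Finset.mem_range.mp hj))]
    exact list_sum_map_range _ _
  have hma : marea (motz n S)
      = ∑ k ∈ Finset.range m, ((m:ℤ) - 1 - (k:ℤ)) * (((P k).card : ℤ) - 1) := by
    rw [marea, hlen, Finset.sum_congr rfl htake, swap_sum]
  rw [hsumg, hma]
  have e1 : ∑ k ∈ Finset.range m, ((m:ℤ) - 1 - (k:ℤ)) * (((P k).card : ℤ) - 1)
      = ((m:ℤ) - 1) * (∑ k ∈ Finset.range m, ((P k).card : ℤ))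
        - (∑ k ∈ Finset.range m, (k:ℤ) * ((P k).card : ℤ))
        - (∑ k ∈ Finset.range m, ((m:ℤ) - 1 - (k:ℤ))) := by
    rw [Finset.mul_sum, ← Finset.sum_sub_distrib, ← Finset.sum_sub_distrib]
    refine Finset.sum_congr rfl fun k _ => ?_
    ring
  rw [e1, hsum1, gsum_aux]
  have g2 := gauss_choose m
  linarith
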